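/- arXiv:2406.19737 — 3 statements merged into one kernel-verified Lean document; each statement's English description precedes it below -/
import Mathlib

section
/- Let b ∈ H^∞ be non-constant and φ a symbol with bounded composition operator C_φ on H². Then the multiplication operator T_b does not belong to the weak-operator-topology closure of the algebra {p(C_φ) : p polynomial}. -/
open Complex Polynomial

/-- The Hardy–Hilbert space `H²` of Dirichlet series, realized as `ℓ²` of coefficients. -/
noncomputable abbrev HardyDirichlet := lp (fun _ : ℕ => ℂ) 2

/-- Evaluation of the Dirichlet series with coefficient sequence `x` at `s`:
`∑ₙ xₙ (n+1)^{-s}`. -/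
noncomputable def dirEval (x : HardyDirichlet) (s : ℂ) : ℂ :=
  ∑' n : ℕ, x n * ((n : ℂ) + 1) ^ (-s)

/-!
Point evaluations at `Re s > 1/2` are inner products with reproducing kernels, so
`A ↦ (A 1)(s) - (A 1)(t)` is WOT-continuous. It vanishes on every `p(C_φ)`: since
`(C_φ x)(s) = x(φ s)`, the series `C_φ^k 1` is identically `1`, so `p(C_φ) 1` is the constant
`p(1)`. On `T_b` it equals `b s - b t`, which is nonzero for suitable `s, t`.
-/

/-- The reproducing kernel of `H²` at `s`. -/
noncomputable def dirKernel (s : ℂ) (n : ℕ) : ℂ := starRingEnd ℂ (((n : ℂ) + 1) ^ (-s))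

lemma norm_dirKernel (s : ℂ) (n : ℕ) : ‖dirKernel s n‖ = ((n : ℝ) + 1) ^ (-s.re) := by
  have h : ((n : ℂ) + 1) = (((n : ℝ) + 1 : ℝ) : ℂ) := by push_cast; ring
  rw [dirKernel, RCLike.norm_conj, h, Complex.norm_cpow_eq_rpow_re_of_pos (by positivity)]
  simp

lemma memℓp_dirKernel {s : ℂ} (hs : 1 / 2 < s.re) : Memℓp (dirKernel s) 2 := by
  apply memℓp_gen
  have hsum : Summable (fun n : ℕ => (n : ℝ) ^ (-(2 * s.re))) := by
    rw [Real.summable_nat_rpow]; linarith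
  refine ((summable_nat_add_iff 1).mpr hsum).congr fun n => ?_
  rw [norm_dirKernel, ← Real.rpow_mul (by positivity)]
  norm_num
  ring_nf

noncomputable def dirKernelLp {s : ℂ} (hs : 1 / 2 < s.re) : HardyDirichlet :=
  ⟨dirKernel s, memℓp_dirKernel hs⟩

lemma dirEval_eq_inner {s : ℂ} (hs : 1 / 2 < s.re) (x : HardyDirichlet) :
    dirEval x s = inner ℂ (dirKernelLp hs) x := by
  rw [lp.inner_eq_tsum, dirEval]
  refine tsum_congr fun n => ?_
  simp only [RCLike.inner_apply, dirKernelLp, dirKernel, Complex.conj_conj]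

noncomputable def dirEvalCLM {s : ℂ} (hs : 1 / 2 < s.re) : HardyDirichlet →L[ℂ] ℂ :=
  innerSL ℂ (dirKernelLp hs)

lemma dirEvalCLM_apply {s : ℂ} (hs : 1 / 2 < s.re) (x : HardyDirichlet) :
    dirEvalCLM hs x = dirEval x s :=
  (dirEval_eq_inner hs x).symm

lemma isClosed_setOf_dirEval_apply_eq (x : HardyDirichlet) {s t : ℂ} (hs : 1 / 2 < s.re)
    (ht : 1 / 2 < t.re) :
    IsClosed {A : HardyDirichlet →WOT[ℂ] HardyDirichlet | dirEval (A x) s = dirEval (A x) t} := by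
  simpa only [dirEvalCLM_apply] using
    isClosed_eq (ContinuousLinearMapWOT.continuous_dual_apply x (dirEvalCLM hs))
      (ContinuousLinearMapWOT.continuous_dual_apply x (dirEvalCLM ht))

/-- Index `0` carries the term `1⁻ˢ`, so this is the constant series `1`. -/
noncomputable def dirOne : HardyDirichlet := lp.single 2 0 1

lemma dirEval_dirOne (s : ℂ) : dirEval dirOne s = 1 := by
  rw [dirEval, tsum_eq_single 0 fun n hn => by rw [dirOne, lp.single_apply_ne 2 0 1 hn, zero_mul]]
  simp [dirOne]

section CompositionOperator

variable {φ : ℂ → ℂ} {Cφ : HardyDirichlet →L[ℂ] HardyDirichlet}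
  (hφ : ∀ s : ℂ, 1 / 2 < s.re → 1 / 2 < (φ s).re)
  (hCφ : ∀ x : HardyDirichlet, ∀ s : ℂ, 1 / 2 < s.re → dirEval (Cφ x) s = dirEval x (φ s))
include hφ hCφ

lemma dirEval_pow_apply_dirOne (k : ℕ) {s : ℂ} (hs : 1 / 2 < s.re) :
    dirEval ((Cφ ^ k) dirOne) s = 1 := by
  induction k generalizing s with
  | zero => exact dirEval_dirOne s
  | succ k ih => rw [pow_succ', mul_apply_eq_comp, hCφ _ s hs, ih (hφ s hs)]

lemma dirEval_aeval_apply_dirOne (p : ℂ[X]) {s : ℂ} (hs : 1 / 2 < s.re) :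
    dirEval (aeval Cφ p dirOne) s = p.eval 1 := by
  rw [← dirEvalCLM_apply hs, aeval_eq_sum_range, eval_eq_sum_range, sum_apply, map_sum]
  refine Finset.sum_congr rfl fun k _ => ?_
  rw [smul_apply, map_smul, dirEvalCLM_apply hs, dirEval_pow_apply_dirOne hφ hCφ k hs,
    smul_eq_mul, one_pow, mul_one]

end CompositionOperator

theorem multiplication_not_in_wot_closure_general
    (φ b : ℂ → ℂ)
    (hφ : ∀ s : ℂ, 1 / 2 < s.re → 1 / 2 < (φ s).re)
    (Cφ Tb : HardyDirichlet →L[ℂ] HardyDirichlet)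
    (hCφ : ∀ x : HardyDirichlet, ∀ s : ℂ, 1 / 2 < s.re → dirEval (Cφ x) s = dirEval x (φ s))
    (hTb : ∀ x : HardyDirichlet, ∀ s : ℂ, 1 / 2 < s.re → dirEval (Tb x) s = b s * dirEval x s)
    (hnonconst : ∃ s t : ℂ, 1 / 2 < s.re ∧ 1 / 2 < t.re ∧ b s ≠ b t) :
    ContinuousLinearMapWOT.ofCLM Tb ∉
      closure (⇑(ContinuousLinearMapWOT.linearEquiv (σ := RingHom.id ℂ) (E := HardyDirichlet) (F := HardyDirichlet) ℂ).symm ''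
        {A : HardyDirichlet →L[ℂ] HardyDirichlet | ∃ p : Polynomial ℂ, A = aeval Cφ p}) := by
  obtain ⟨s, t, hs, ht, hne⟩ := hnonconst
  intro hmem
  have hsub : ⇑(ContinuousLinearMapWOT.linearEquiv (σ := RingHom.id ℂ) (E := HardyDirichlet)
      (F := HardyDirichlet) ℂ).symm ''
        {A : HardyDirichlet →L[ℂ] HardyDirichlet | ∃ p : Polynomial ℂ, A = aeval Cφ p} ⊆
      {A | dirEval (A dirOne) s = dirEval (A dirOne) t} := by
    rintro _ ⟨_, ⟨p, rfl⟩, rfl⟩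
    exact (dirEval_aeval_apply_dirOne hφ hCφ p hs).trans
      (dirEval_aeval_apply_dirOne hφ hCφ p ht).symm
  have hTb_one : dirEval (Tb dirOne) s = dirEval (Tb dirOne) t :=
    closure_minimal hsub (isClosed_setOf_dirEval_apply_eq dirOne hs ht) hmem
  rw [hTb _ s hs, hTb _ t ht, dirEval_dirOne, dirEval_dirOne, mul_one, mul_one] at hTb_one
  exact hne hTb_one

/-- For a nonconstant `b ∈ H^∞` (with `b ∘ φ = b`), the multiplication
operator `T_b` does not belong to the WOT-closure of the polynomial algebra generated by the
composition operator `C_φ` on `H²`. -/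
theorem multiplication_not_in_wot_closure
    (φ b : ℂ → ℂ)
    (hφ : ∀ s : ℂ, 1 / 2 < s.re → 1 / 2 < (φ s).re)
    (Cφ Tb : HardyDirichlet →L[ℂ] HardyDirichlet)
    (hCφ : ∀ x : HardyDirichlet, ∀ s : ℂ, 1 / 2 < s.re → dirEval (Cφ x) s = dirEval x (φ s))
    (hTb : ∀ x : HardyDirichlet, ∀ s : ℂ, 1 / 2 < s.re → dirEval (Tb x) s = b s * dirEval x s)
    (hbHtwo : ∃ B : HardyDirichlet, ∀ s : ℂ, 1 / 2 < s.re → dirEval B s = b s)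
    (hbbdd : ∃ M : ℝ, ∀ s : ℂ, 1 / 2 < s.re → ‖b s‖ ≤ M)
    (hnonconst : ∃ s t : ℂ, 1 / 2 < s.re ∧ 1 / 2 < t.re ∧ b s ≠ b t)
    (hfix : ∀ s : ℂ, 1 / 2 < s.re → b (φ s) = b s) :
    ContinuousLinearMapWOT.ofCLM Tb ∉
      closure (⇑(ContinuousLinearMapWOT.linearEquiv (σ := RingHom.id ℂ) (E := HardyDirichlet) (F := HardyDirichlet) ℂ).symm ''
        {A : HardyDirichlet →L[ℂ] HardyDirichlet | ∃ p : Polynomial ℂ, A = aeval Cφ p}) :=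
  multiplication_not_in_wot_closure_general φ b hφ Cφ Tb hCφ hTb hnonconst
end

section
/- Let X be a Banach space, T ∈ B(X) with ‖T‖ < 1, and suppose T has the double commutant property. Then 1 ⊕ T acting on ℂ ⊕ X has the double commutant property. -/
open Polynomial

/-- An operator `A` on a complex Banach space has the **double commutant property** if the
weak-operator-topology closure of the polynomial algebra generated by `A` equals the double
commutant `{A}'' = {S | ∀ R, RA = AR → RS = SR}` of `A`. -/
def HasDoubleCommutantProperty {X : Type*} [NormedAddCommGroup X] [NormedSpace ℂ X]
    (A : X →L[ℂ] X) : Prop :=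
  closure ((ContinuousLinearMapWOT.ofCLM : (X →L[ℂ] X) → X →WOT[ℂ] X) ''
      {P : X →L[ℂ] X | ∃ p : Polynomial ℂ, P = aeval A p}) =
    (ContinuousLinearMapWOT.ofCLM : (X →L[ℂ] X) → X →WOT[ℂ] X) ''
      {S : X →L[ℂ] X | ∀ R : X →L[ℂ] X, R * A = A * R → R * S = S * R}

/-! The commutant of `1 ⊕ T` contains the projection `1 ⊕ 0` and every `0 ⊕ R` with
`R ∈ {T}'`, so every element of `{1 ⊕ T}''` has the form `a ⊕ D` with `D ∈ {T}''`, which is the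
WOT-closure of the polynomials in `T`. Since `‖T‖ < 1`, `(1 ⊕ T)ⁿ = 1 ⊕ Tⁿ → 1 ⊕ 0`, so `1 ⊕ 0`
lies in the WOT-closed algebra generated by `1 ⊕ T`; so does `0 ⊕ q(T) = (1 - 1 ⊕ 0) q(1 ⊕ T)`
for every polynomial `q`, hence, `D ↦ 0 ⊕ D` being WOT-continuous, every `a ⊕ D` as above. The
other inclusion holds for any operator, because commutants are WOT-closed. -/

open ContinuousLinearMapWOT Filter Topology

lemma MulEquiv.image_centralizer {M N : Type*} [Mul M] [Mul N] (e : M ≃* N) (s : Set M) :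
    e '' Set.centralizer s = Set.centralizer (e '' s) := by
  ext y
  obtain ⟨x, rfl⟩ := e.surjective y
  simp [Set.mem_centralizer_iff, e.injective.mem_set_image, ← map_mul, e.injective.eq_iff]

namespace ContinuousLinearMapWOT

section

variable {𝕜 E : Type*} [NormedField 𝕜] [AddCommGroup E] [TopologicalSpace E] [Module 𝕜 E]
  [IsTopologicalAddGroup E] [ContinuousConstSMul 𝕜 E]

instance : IsSemitopologicalSemiring (E →WOT[𝕜] E) where
  continuous_const_mul := continuous_postcomp _
  continuous_mul_const := continuous_precomp _

omit [ContinuousConstSMul 𝕜 E] in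
lemma image_ofCLM_centralizer (s : Set (E →L[𝕜] E)) :
    ofCLM '' Set.centralizer s = Set.centralizer (ofCLM '' s) :=
  (ringEquiv (𝕜₁ := 𝕜) (E := E)).symm.toMulEquiv.image_centralizer s

lemma ofCLM_aeval (A : E →L[𝕜] E) (p : 𝕜[X]) : ofCLM (aeval A p) = aeval (ofCLM A) p :=
  (aeval_algHom_apply (algEquiv 𝕜 (𝕜₁ := 𝕜) (E := E)).symm A p).symm

variable (𝕜 E) in
def blockDiag : 𝕜 × (E →WOT[𝕜] E) →ₐ[𝕜] (𝕜 × E →WOT[𝕜] 𝕜 × E) where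
  toFun x := ofCLM ((x.1 • ContinuousLinearMap.id 𝕜 𝕜).prodMap (toCLM x.2))
  map_one' := by ext <;> simp
  map_mul' x y := by ext <;> simp [mul_assoc]
  map_zero' := by ext <;> simp
  map_add' x y := by ext <;> simp [add_mul]
  commutes' c := by ext <;> simp

@[simp]
lemma blockDiag_apply (x : 𝕜 × (E →WOT[𝕜] E)) (z : 𝕜 × E) :
    blockDiag 𝕜 E x z = (x.1 * z.1, x.2 z.2) := rfl

lemma blockDiag_injective : Function.Injective (blockDiag 𝕜 E) := by
  intro x y h
  refine Prod.ext ?_ ?_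
  · simpa using congrArg (fun w => (w (1, 0)).1) h
  · refine ContinuousLinearMapWOT.ext fun v => ?_
    simpa using congrArg (fun w => (w (0, v)).2) h

lemma blockDiag_mem_centralizer_singleton_iff {a b : 𝕜} {d t : E →WOT[𝕜] E} :
    blockDiag 𝕜 E (a, d) ∈ Set.centralizer {blockDiag 𝕜 E (b, t)} ↔
      d ∈ Set.centralizer {t} := by
  simp [Set.mem_centralizer_iff, ← map_mul, blockDiag_injective.eq_iff, mul_comm]

lemma ofCLM_id_prodMap (T : E →L[𝕜] E) :
    ofCLM ((ContinuousLinearMap.id 𝕜 𝕜).prodMap T) = blockDiag 𝕜 E (1, ofCLM T) := by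
  ext <;> simp

lemma continuous_blockDiag_mk (a : 𝕜) :
    Continuous fun d : E →WOT[𝕜] E => blockDiag 𝕜 E (a, d) := by
  refine continuous_of_dual_apply_continuous fun z y => ?_
  have h (d : E →WOT[𝕜] E) :
      y (blockDiag 𝕜 E (a, d) z) = y (a * z.1, 0) + (y.comp (.inr 𝕜 𝕜 E)) (d z.2) := by
    rw [ContinuousLinearMap.comp_apply, ← map_add]
    simp
  simp_rw [h]
  exact continuous_const.add (continuous_dual_apply _ _)

lemma eq_blockDiag_of_commute {w : 𝕜 × E →WOT[𝕜] 𝕜 × E}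
    (hw : Commute (blockDiag 𝕜 E (1, 0)) w) :
    w = blockDiag 𝕜 E
      ((w (1, 0)).1, (ofCLM (.snd 𝕜 𝕜 E)).comp (w.comp (ofCLM (.inr 𝕜 𝕜 E)))) := by
  have hproj (z : 𝕜 × E) : ((w z).1, 0) = w (z.1, 0) := by
    simpa using congrArg (· z) hw.eq
  refine ContinuousLinearMapWOT.ext fun ⟨c, x⟩ => Prod.ext ?_ ?_
  · have hc : w (c, 0) = c • w (1, 0) := by
      rw [← map_smul, Prod.smul_mk, smul_eq_mul, mul_one, smul_zero]
    simpa [hc, mul_comm] using congrArg Prod.fst (hproj (c, x))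
  · have hsplit : w (c, x) = w (c, 0) + w (0, x) := by
      rw [← map_add, Prod.mk_add_mk, add_zero, zero_add]
    simpa [hsplit] using (congrArg Prod.snd (hproj (c, 0))).symm

lemma exists_eq_blockDiag_of_mem_centralizer_centralizer {t : E →WOT[𝕜] E}
    {w : 𝕜 × E →WOT[𝕜] 𝕜 × E}
    (hw : w ∈ Set.centralizer (Set.centralizer {blockDiag 𝕜 E (1, t)})) :
    ∃ a d, d ∈ Set.centralizer (Set.centralizer {t}) ∧ w = blockDiag 𝕜 E (a, d) := by
  have hcomm {a : 𝕜} {r : E →WOT[𝕜] E} (hr : r ∈ Set.centralizer {t}) :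
      Commute (blockDiag 𝕜 E (a, r)) w :=
    hw _ (blockDiag_mem_centralizer_singleton_iff.mpr hr)
  obtain ⟨a, d, hwd⟩ : ∃ a d, w = blockDiag 𝕜 E (a, d) :=
    ⟨_, _, eq_blockDiag_of_commute (hcomm Set.zero_mem_centralizer)⟩
  refine ⟨a, d, fun r hr => ?_, hwd⟩
  have := (hcomm (a := 0) hr).eq
  rw [hwd, ← map_mul, ← map_mul] at this
  simpa using congrArg Prod.snd (blockDiag_injective this)

lemma blockDiag_one_zero_mem_topologicalClosure {t : E →WOT[𝕜] E}
    (ht : Tendsto (t ^ ·) atTop (𝓝 0)) :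
    blockDiag 𝕜 E (1, 0) ∈ (Algebra.adjoin 𝕜 {blockDiag 𝕜 E (1, t)}).topologicalClosure := by
  have hlim : Tendsto (blockDiag 𝕜 E (1, t) ^ ·) atTop (𝓝 (blockDiag 𝕜 E (1, 0))) := by
    simpa [Function.comp_def, ← map_pow] using ((continuous_blockDiag_mk 1).tendsto 0).comp ht
  exact mem_closure_of_tendsto hlim
    (.of_forall fun n => pow_mem (Algebra.self_mem_adjoin_singleton 𝕜 _) n)

lemma blockDiag_mem_topologicalClosure_adjoin {t d : E →WOT[𝕜] E}
    (ht : Tendsto (t ^ ·) atTop (𝓝 0)) (hd : d ∈ (Algebra.adjoin 𝕜 {t}).topologicalClosure)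
    (a : 𝕜) :
    blockDiag 𝕜 E (a, d) ∈ (Algebra.adjoin 𝕜 {blockDiag 𝕜 E (1, t)}).topologicalClosure := by
  set 𝒮 := (Algebra.adjoin 𝕜 {blockDiag 𝕜 E (1, t)}).topologicalClosure
  have he : blockDiag 𝕜 E (1, 0) ∈ 𝒮 := blockDiag_one_zero_mem_topologicalClosure ht
  have hpoly :
      (Algebra.adjoin 𝕜 {t} : Set (E →WOT[𝕜] E)) ⊆ (fun d => blockDiag 𝕜 E (0, d)) ⁻¹' 𝒮 := by
    rw [Algebra.adjoin_singleton_eq_range_aeval]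
    rintro _ ⟨p, rfl⟩
    have h : blockDiag 𝕜 E (0, aeval t p) =
        (1 - blockDiag 𝕜 E (1, 0)) * aeval (blockDiag 𝕜 E (1, t)) p := by
      rw [aeval_algHom_apply, ← map_one (blockDiag 𝕜 E), ← map_sub, ← map_mul, aeval_prod_apply]
      congr 1
      ext <;> simp
    change blockDiag 𝕜 E (0, aeval t p) ∈ 𝒮
    rw [h]
    exact mul_mem (sub_mem (one_mem _) he) (Subalgebra.le_topologicalClosure _
      (aeval_mem_adjoin_singleton 𝕜 _))
  have hd' : blockDiag 𝕜 E (0, d) ∈ 𝒮 :=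
    closure_minimal hpoly
      ((Subalgebra.isClosed_topologicalClosure _).preimage (continuous_blockDiag_mk 0)) hd
  have hsplit : blockDiag 𝕜 E (a, d) = a • blockDiag 𝕜 E (1, 0) + blockDiag 𝕜 E (0, d) := by
    rw [← map_smul, ← map_add]
    simp
  rw [hsplit]
  exact add_mem (Subalgebra.smul_mem _ he a) hd'

end

lemma tendsto_pow_ofCLM_of_norm_lt_one {𝕜 E : Type*} [NontriviallyNormedField 𝕜]
    [NormedAddCommGroup E] [NormedSpace 𝕜 E] {T : E →L[𝕜] E} (hT : ‖T‖ < 1) :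
    Tendsto (ofCLM T ^ ·) atTop (𝓝 0) := by
  simpa [Function.comp_def] using
    (continuous_ofCLM.tendsto 0).comp (tendsto_pow_atTop_nhds_zero_of_norm_lt_one hT)

end ContinuousLinearMapWOT

lemma hasDoubleCommutantProperty_iff {E : Type*} [NormedAddCommGroup E] [NormedSpace ℂ E]
    (A : E →L[ℂ] E) : HasDoubleCommutantProperty A ↔
      (Algebra.adjoin ℂ {ofCLM A}).topologicalClosure =
        Subalgebra.centralizer ℂ (Set.centralizer {ofCLM A}) := by
  rw [← SetLike.coe_set_eq, Subalgebra.topologicalClosure_coe, Subalgebra.coe_centralizer]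
  have h_adjoin : ofCLM '' {P : E →L[ℂ] E | ∃ p : ℂ[X], P = aeval A p} =
      Algebra.adjoin ℂ {ofCLM A} := by
    ext w
    simp [Algebra.adjoin_singleton_eq_range_aeval, ofCLM_aeval, eq_comm]
  have h_centralizer : ofCLM '' {S : E →L[ℂ] E | ∀ R, R * A = A * R → R * S = S * R} =
      Set.centralizer (Set.centralizer {ofCLM A}) := by
    rw [← Set.image_singleton, ← image_ofCLM_centralizer, ← image_ofCLM_centralizer]
    congr 1
    ext S
    simp [Set.mem_centralizer_iff, eq_comm]
  rw [HasDoubleCommutantProperty, h_adjoin, h_centralizer]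

theorem one_oplus_contraction_double_commutant_general
    {X : Type*} [NormedAddCommGroup X] [NormedSpace ℂ X]
    (T : X →L[ℂ] X) (hT : ‖T‖ < 1) (hdcp : HasDoubleCommutantProperty T) :
    HasDoubleCommutantProperty ((ContinuousLinearMap.id ℂ ℂ).prodMap T) := by
  rw [hasDoubleCommutantProperty_iff] at hdcp ⊢
  rw [ofCLM_id_prodMap]
  refine le_antisymm (Subalgebra.topologicalClosure_adjoin_le_centralizer_centralizer ℂ _)
    fun w hw => ?_
  obtain ⟨a, d, hd, rfl⟩ := exists_eq_blockDiag_of_mem_centralizer_centralizer hw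
  exact blockDiag_mem_topologicalClosure_adjoin (tendsto_pow_ofCLM_of_norm_lt_one hT)
    (by rwa [hdcp]) a

/-- If `‖T‖ < 1` and `T` has the double commutant property, then `1 ⊕ T`
acting on `ℂ ⊕ X` has the double commutant property. -/
theorem one_oplus_contraction_double_commutant
    {X : Type*} [NormedAddCommGroup X] [NormedSpace ℂ X] [CompleteSpace X]
    (T : X →L[ℂ] X) (hT : ‖T‖ < 1) (hdcp : HasDoubleCommutantProperty T) :
    HasDoubleCommutantProperty ((ContinuousLinearMap.id ℂ ℂ).prodMap T) :=
  one_oplus_contraction_double_commutant_general T hT hdcp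
end

section
/- Let φ : 𝔻 → 𝔻 be holomorphic with φ(z) = λ z^p ψ(z), where p ≥ 2, λ ≠ 0, ψ(0) = 1, and ψ does not vanish on 𝔻. Then there exists a holomorphic function u on 𝔻 with u(0) = 0, u'(0) = 1, satisfying Böttcher's equation u ∘ φ = λ u^p, and with ‖u‖_∞ ≤ ‖ψ‖_∞^{1/(p−1)} (in particular |λ|·‖u‖_∞^{p−1} ≤ ‖φ‖_∞ ≤ 1). -/
open Complex Metric Set

/-!
Write `ψ = exp ∘ g` with `g` holomorphic and `g 0 = 0` (a primitive of `ψ'/ψ` on the disc). Taking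
logarithms in the paper's products `uₙ(z) = z ∏ₖ ψ^{1/pᵏ}(φ^{[k-1]} z)` suggests
`u z = z · exp (h z)` with `h = ∑ₙ p^{-(n+1)} g ∘ φ^[n]`. By the Schwarz lemma `|φ z| ≤ |z|`, so on
each disc `|z| ≤ r < 1` all terms `g ∘ φ^[n]` are bounded by `max_{|w| ≤ r} |g w|` and the series
converges locally uniformly, hence `h` is holomorphic. Shifting the index gives
`p h = g + h ∘ φ`, which after exponentiating is exactly `u ∘ φ = λ uᵖ`. Finally
`Re g = log |ψ| ≤ log ‖ψ‖_∞`, so `Re h ≤ log ‖ψ‖_∞ / (p - 1)`.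
-/

theorem Complex.exists_differentiableOn_eqOn_exp_comp_ball {f : ℂ → ℂ} {c w : ℂ} {r : ℝ}
    (hf : DifferentiableOn ℂ f (ball c r)) (hf₀ : ∀ z ∈ ball c r, f z ≠ 0) (hw : exp w = f c) :
    ∃ g : ℂ → ℂ, DifferentiableOn ℂ g (ball c r) ∧ g c = w ∧ EqOn (exp ∘ g) f (ball c r) := by
  have hlogDeriv : DifferentiableOn ℂ (fun z ↦ deriv f z / f z) (ball c r) :=
    ((hf.analyticOnNhd isOpen_ball).deriv.differentiableOn).div hf hf₀
  obtain ⟨g, hgc, hg⟩ := hlogDeriv.isExactOn_ball.with_val_at c w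
  have hgd : DifferentiableOn ℂ g (ball c r) :=
    fun z hz ↦ (hg z hz).differentiableAt.differentiableWithinAt
  have hderiv : ∀ z ∈ ball c r, HasDerivAt (fun z ↦ exp (-g z) * f z) 0 z := by
    intro z hz
    have hexp : HasDerivAt (fun z ↦ exp (-g z)) (exp (-g z) * -(deriv f z / f z)) z :=
      (hg z hz).neg.cexp
    refine (hexp.mul (hf.differentiableAt (isOpen_ball.mem_nhds hz)).hasDerivAt).congr_deriv ?_
    rw [mul_neg, neg_mul, mul_assoc, div_mul_cancel₀ _ (hf₀ z hz), neg_add_cancel]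
  refine ⟨g, hgd, hgc, fun z hz ↦ ?_⟩
  have hconst := isOpen_ball.is_const_of_deriv_eq_zero (convex_ball c r).isPreconnected
    (fun z hz ↦ (hderiv z hz).differentiableAt.differentiableWithinAt)
    (fun z hz ↦ (hderiv z hz).deriv) hz (mem_ball_self (pos_of_mem_ball hz))
  rw [hgc, ← hw, ← exp_add, neg_add_cancel, exp_zero] at hconst
  simpa [← exp_add, exp_neg] using (congrArg (exp (g z) * ·) hconst).symm

theorem hasSum_inv_pow_succ {a : ℝ} (ha : 1 < a) :
    HasSum (fun n : ℕ ↦ (a ^ (n + 1))⁻¹) (a - 1)⁻¹ := by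
  have h := (hasSum_geometric_of_lt_one (inv_nonneg.2 (by positivity))
    (inv_lt_one_of_one_lt₀ ha)).mul_left a⁻¹
  have hsum : a⁻¹ * (1 - a⁻¹)⁻¹ = (a - 1)⁻¹ := by
    field_simp
  simpa only [hsum, ← inv_pow, ← mul_inv, ← pow_succ'] using h

theorem norm_inv_pow_smul_le {a M : ℝ} (ha : 0 < a) {x : ℂ} (hx : ‖x‖ ≤ M) (n : ℕ) :
    ‖(a ^ (n + 1))⁻¹ • x‖ ≤ M * (a ^ (n + 1))⁻¹ := by
  rw [norm_smul, Real.norm_of_nonneg (by positivity), mul_comm]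
  gcongr

section SelfMap

variable {φ : ℂ → ℂ} {R r : ℝ}

theorem mapsTo_ball_of_norm_le (hφ : ∀ z ∈ ball (0 : ℂ) R, ‖φ z‖ ≤ ‖z‖) :
    MapsTo φ (ball 0 R) (ball 0 R) :=
  fun z hz ↦ mem_ball_zero_iff.2 ((hφ z hz).trans_lt (mem_ball_zero_iff.1 hz))

theorem mapsTo_closedBall_of_norm_le (hφ : ∀ z ∈ ball (0 : ℂ) R, ‖φ z‖ ≤ ‖z‖) (hr : r < R) :
    MapsTo φ (closedBall 0 r) (closedBall 0 r) :=
  fun z hz ↦ mem_closedBall_zero_iff.2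
    ((hφ z (closedBall_subset_ball hr hz)).trans (mem_closedBall_zero_iff.1 hz))

end SelfMap

noncomputable def bottcherSeries (a : ℝ) (g φ : ℂ → ℂ) (z : ℂ) : ℂ :=
  ∑' n : ℕ, (a ^ (n + 1))⁻¹ • g (φ^[n] z)

namespace bottcherSeries

variable {a R r : ℝ} {g φ : ℂ → ℂ} {z : ℂ}

theorem exists_norm_comp_iterate_le (hg : ContinuousOn g (ball 0 R))
    (hφ : ∀ z ∈ ball (0 : ℂ) R, ‖φ z‖ ≤ ‖z‖) (hr : r < R) :
    ∃ M, ∀ n, ∀ z ∈ closedBall (0 : ℂ) r, ‖g (φ^[n] z)‖ ≤ M := by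
  obtain ⟨M, hM⟩ := (isCompact_closedBall 0 r).exists_bound_of_continuousOn
    (hg.mono (closedBall_subset_ball hr))
  exact ⟨M, fun n z hz ↦ hM _ ((mapsTo_closedBall_of_norm_le hφ hr).iterate n hz)⟩

theorem summable (ha : 1 < a) (hg : ContinuousOn g (ball 0 R))
    (hφ : ∀ z ∈ ball (0 : ℂ) R, ‖φ z‖ ≤ ‖z‖) (hz : z ∈ ball 0 R) :
    Summable fun n : ℕ ↦ (a ^ (n + 1))⁻¹ • g (φ^[n] z) := by
  obtain ⟨M, hM⟩ := exists_norm_comp_iterate_le hg hφ (mem_ball_zero_iff.1 hz)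
  exact .of_norm_bounded ((hasSum_inv_pow_succ ha).summable.mul_left M)
    fun n ↦ norm_inv_pow_smul_le (by linarith) (hM n z (mem_closedBall_zero_iff.2 le_rfl)) n

theorem differentiableOn (ha : 1 < a) (hg : DifferentiableOn ℂ g (ball 0 R))
    (hφd : DifferentiableOn ℂ φ (ball 0 R)) (hφ : ∀ z ∈ ball (0 : ℂ) R, ‖φ z‖ ≤ ‖z‖) :
    DifferentiableOn ℂ (bottcherSeries a g φ) (ball 0 R) := by
  have hmaps := mapsTo_ball_of_norm_le hφ
  refine differentiableOn_of_locally_differentiableOn fun z hz ↦ ?_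
  obtain ⟨r, hzr, hrR⟩ := exists_between (mem_ball_zero_iff.1 hz)
  obtain ⟨M, hM⟩ := exists_norm_comp_iterate_le hg.continuousOn hφ hrR
  refine ⟨ball 0 r, isOpen_ball, mem_ball_zero_iff.2 hzr, ?_⟩
  have hterm : ∀ n : ℕ, DifferentiableOn ℂ (fun w ↦ (a ^ (n + 1))⁻¹ • g (φ^[n] w)) (ball 0 R) :=
    fun n ↦ (hg.comp (hφd.iterate hmaps n) (hmaps.iterate n)).const_smul (a ^ (n + 1))⁻¹
  exact differentiableOn_tsum_of_summable_norm ((hasSum_inv_pow_succ ha).summable.mul_left M)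
    (fun n ↦ (hterm n).mono inter_subset_left)
    (isOpen_ball.inter isOpen_ball)
    fun n w hw ↦ norm_inv_pow_smul_le (by linarith) (hM n w (ball_subset_closedBall hw.2)) n

theorem smul_eq_add (ha : a ≠ 0) (hsum : Summable fun n : ℕ ↦ (a ^ (n + 1))⁻¹ • g (φ^[n] z)) :
    a • bottcherSeries a g φ z = g z + bottcherSeries a g φ (φ z) := by
  have hshift : ∀ n : ℕ, (a ^ (n + 1 + 1))⁻¹ • g (φ^[n + 1] z) =
      a⁻¹ • ((a ^ (n + 1))⁻¹ • g (φ^[n] (φ z))) := fun n ↦ by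
    rw [Function.iterate_succ_apply, smul_smul, ← mul_inv, ← pow_succ']
  rw [bottcherSeries, hsum.tsum_eq_zero_add, bottcherSeries]
  simp only [hshift, tsum_const_smul'', zero_add, pow_one, Function.iterate_zero_apply, smul_add,
    smul_inv_smul₀ ha]

theorem eq_zero_of_isFixedPt (hz : φ z = z) (hg : g z = 0) : bottcherSeries a g φ z = 0 := by
  simp [bottcherSeries, Function.iterate_fixed hz, hg]

theorem re_le (ha : 1 < a) (hsum : Summable fun n : ℕ ↦ (a ^ (n + 1))⁻¹ • g (φ^[n] z)) {B : ℝ}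
    (hB : ∀ n, (g (φ^[n] z)).re ≤ B) : (bottcherSeries a g φ z).re ≤ B / (a - 1) := by
  rw [div_eq_mul_inv]
  refine hasSum_le (fun n ↦ ?_) (hasSum_re hsum.hasSum) ((hasSum_inv_pow_succ ha).mul_left B)
  rw [smul_re, smul_eq_mul, mul_comm]
  gcongr
  exact hB n

end bottcherSeries

theorem deriv_mul_exp_zero {h : ℂ → ℂ} (hd : DifferentiableAt ℂ h 0) (h0 : h 0 = 0) :
    deriv (fun z ↦ z * exp (h z)) 0 = 1 := by
  have hderiv : HasDerivAt (fun z ↦ z * exp (h z))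
      (1 * exp (h 0) + 0 * (exp (h 0) * deriv h 0)) 0 :=
    (hasDerivAt_id' 0).mul hd.hasDerivAt.cexp
  simpa [h0] using hderiv.deriv

theorem norm_mul_exp_le_rpow {z w : ℂ} {a C : ℝ} (hz : ‖z‖ ≤ 1) (hC : 0 < C)
    (hw : w.re ≤ Real.log C / a) : ‖z * exp w‖ ≤ C ^ (1 / a) := by
  rw [norm_mul, norm_exp, Real.rpow_def_of_pos hC, mul_one_div]
  calc ‖z‖ * Real.exp w.re ≤ 1 * Real.exp (Real.log C / a) :=
        mul_le_mul hz (Real.exp_le_exp.2 hw) (Real.exp_pos _).le zero_le_one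
    _ = Real.exp (Real.log C / a) := one_mul _

theorem bottcher_equation_solution_general
    (φ ψ : ℂ → ℂ) (p : ℕ) (hp : 2 ≤ p) (lam : ℂ)
    (hφhol : DifferentiableOn ℂ φ (ball (0 : ℂ) 1))
    (hφself : ∀ z ∈ ball (0 : ℂ) 1, φ z ∈ ball (0 : ℂ) 1)
    (hψhol : DifferentiableOn ℂ ψ (ball (0 : ℂ) 1))
    (hform : ∀ z ∈ ball (0 : ℂ) 1, φ z = lam * z ^ p * ψ z)
    (hψ0 : ψ 0 = 1) (hψne : ∀ z ∈ ball (0 : ℂ) 1, ψ z ≠ 0) :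
    ∃ u : ℂ → ℂ, DifferentiableOn ℂ u (ball (0 : ℂ) 1) ∧ u 0 = 0 ∧ deriv u 0 = 1 ∧
      (∀ z ∈ ball (0 : ℂ) 1, u (φ z) = lam * (u z) ^ p) ∧
      ∀ C : ℝ, (∀ z ∈ ball (0 : ℂ) 1, ‖ψ z‖ ≤ C) →
        ∀ z ∈ ball (0 : ℂ) 1, ‖u z‖ ≤ C ^ ((1 : ℝ) / (p - 1)) := by
  have hp₁ : (1 : ℝ) < p := by exact_mod_cast hp
  have h0 : (0 : ℂ) ∈ ball (0 : ℂ) 1 := mem_ball_self one_pos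
  have hφ0 : φ 0 = 0 := by rw [hform 0 h0, zero_pow (by omega), mul_zero, zero_mul]
  have hschwarz : ∀ z ∈ ball (0 : ℂ) 1, ‖φ z‖ ≤ ‖z‖ := fun z hz ↦
    norm_le_norm_of_mapsTo_ball hφhol (fun w hw ↦ ball_subset_closedBall (hφself w hw)) hφ0
      (mem_ball_zero_iff.1 hz)
  obtain ⟨g, hg, hg0, hexp⟩ :=
    exists_differentiableOn_eqOn_exp_comp_ball hψhol hψne (w := 0) (by rw [exp_zero, hψ0])
  set h := bottcherSeries p g φ
  have hsum := fun z (hz : z ∈ ball (0 : ℂ) 1) ↦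
    bottcherSeries.summable hp₁ hg.continuousOn hschwarz hz
  have hh0 : h 0 = 0 := bottcherSeries.eq_zero_of_isFixedPt hφ0 hg0
  have hhd : DifferentiableOn ℂ h (ball 0 1) :=
    bottcherSeries.differentiableOn hp₁ hg hφhol hschwarz
  refine ⟨fun z ↦ z * exp (h z), differentiableOn_id.mul hhd.cexp, zero_mul _, ?_,
    fun z hz ↦ ?_, fun C hC z hz ↦ ?_⟩
  · exact deriv_mul_exp_zero (hhd.differentiableAt (ball_mem_nhds 0 one_pos)) hh0
  · have hfun := bottcherSeries.smul_eq_add (by positivity) (hsum z hz)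
    calc φ z * exp (h (φ z)) = lam * z ^ p * exp (g z + h (φ z)) := by
          rw [hform z hz, ← hexp hz, Function.comp_apply, exp_add, mul_assoc]
      _ = lam * (z * exp (h z)) ^ p := by
          rw [← hfun, real_smul, ofReal_natCast, exp_nat_mul, mul_pow, mul_assoc]
  · have hC₀ : 0 < C := one_pos.trans_le (by simpa [hψ0] using hC 0 h0)
    refine norm_mul_exp_le_rpow (mem_ball_zero_iff.1 hz).le hC₀ ?_
    refine bottcherSeries.re_le hp₁ (hsum z hz) fun n ↦ ?_
    have hw := (mapsTo_ball_of_norm_le hschwarz).iterate n hz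
    rw [Real.le_log_iff_exp_le hC₀, ← norm_exp]
    exact (congrArg norm (hexp hw)).trans_le (hC _ hw)

/-- **Böttcher's equation.** Let `φ : 𝔻 → 𝔻` be holomorphic with
`φ(z) = λ z^p ψ(z)`, `p ≥ 2`, `λ ≠ 0`, `ψ(0) = 1` and `ψ` non-vanishing on `𝔻`. Then there is
a holomorphic `u` on `𝔻` with `u(0) = 0`, `u'(0) = 1`, `u ∘ φ = λ uᵖ`, and
`‖u‖_∞ ≤ ‖ψ‖_∞^{1/(p−1)}`. -/
theorem bottcher_equation_solution
    (φ ψ : ℂ → ℂ) (p : ℕ) (hp : 2 ≤ p) (lam : ℂ) (hlam : lam ≠ 0)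
    (hφhol : DifferentiableOn ℂ φ (ball (0 : ℂ) 1))
    (hφself : ∀ z ∈ ball (0 : ℂ) 1, φ z ∈ ball (0 : ℂ) 1)
    (hψhol : DifferentiableOn ℂ ψ (ball (0 : ℂ) 1))
    (hform : ∀ z ∈ ball (0 : ℂ) 1, φ z = lam * z ^ p * ψ z)
    (hψ0 : ψ 0 = 1) (hψne : ∀ z ∈ ball (0 : ℂ) 1, ψ z ≠ 0) :
    ∃ u : ℂ → ℂ, DifferentiableOn ℂ u (ball (0 : ℂ) 1) ∧ u 0 = 0 ∧ deriv u 0 = 1 ∧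
      (∀ z ∈ ball (0 : ℂ) 1, u (φ z) = lam * (u z) ^ p) ∧
      ∀ C : ℝ, (∀ z ∈ ball (0 : ℂ) 1, ‖ψ z‖ ≤ C) →
        ∀ z ∈ ball (0 : ℂ) 1, ‖u z‖ ≤ C ^ ((1 : ℝ) / (p - 1)) :=
  bottcher_equation_solution_general φ ψ p hp lam hφhol hφself hψhol hform hψ0 hψne
end
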